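/- Let a > 0, and define a sequence by ξ_n < min(ξ_{n-1}, a/2^n) with ξ_0 = a. If f_n : K → ℂ^m satisfy ‖f_n − f_{n-1}‖_{∞,K} < ξ_n on a compact set K, and each f_n is injective on K with separation inf{|f_{n-1}(p) − f_{n-1}(q)| : d(p,q) > 1/n} > 2n²ξ_n (for a fixed metric d on K), then the uniform limit f = lim f_n is injective on K. -/
import Mathlib


open Filter

theorem stmt_19 (m : ℕ) {K : Type*} [MetricSpace K] [CompactSpace K]
    (a : ℝ) (ha : 0 < a)
    (ξ : ℕ → ℝ) (hξ0 : ξ 0 = a) (hξpos : ∀ n, 0 < ξ n)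
    (hξrec : ∀ n : ℕ, ξ (n + 1) < min (ξ n) (a / 2 ^ (n + 1)))
    (f : ℕ → K → EuclideanSpace ℂ (Fin m)) (hfc : ∀ n, Continuous (f n))
    (hclose : ∀ (n : ℕ) (p : K), ‖f (n + 1) p - f n p‖ < ξ (n + 1))
    (hinj : ∀ n, Function.Injective (f n))
    (hsep : ∀ (n : ℕ) (p q : K), dist p q > 1 / (n + 1 : ℝ) →
      ‖f n p - f n q‖ > 2 * (n + 1 : ℝ) ^ 2 * ξ (n + 1))
    (F : K → EuclideanSpace ℂ (Fin m))
    (hlim : TendstoUniformly f F atTop) :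
    Function.Injective F := by
  intro p q hFeq
  by_contra hpq
  have hd : 0 < dist p q := dist_pos.mpr hpq
  obtain ⟨n₀, hn₀⟩ := exists_nat_one_div_lt hd
  set n := n₀ + 1 with hn
  have hdn : dist p q > 1 / ((n : ℝ) + 1) := by
    have h1 : (1 : ℝ) / (n + 1) ≤ 1 / (n₀ + 1) := by
      apply one_div_le_one_div_of_le
      · positivity
      · push_cast [hn]; linarith
    linarith
  set D : ℕ → ℝ := fun N => ‖f N p - f N q‖ with hD
  -- hsep applies for all N ≥ n
  have hsep' : ∀ N, n ≤ N → D N > 2 * ((N : ℝ) + 1) ^ 2 * ξ (N + 1) := by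
    intro N hN
    apply hsep
    have h1 : (1 : ℝ) / (N + 1) ≤ 1 / (n + 1) := by
      apply one_div_le_one_div_of_le
      · positivity
      · exact_mod_cast by omega
    linarith
  have hDn : 0 < D n := by
    have := hsep' n le_rfl
    have := hξpos (n + 1)
    nlinarith [sq_nonneg ((n : ℝ) + 1)]
  -- key inequality
  have key : ∀ N, n ≤ N → D n * ((n : ℝ) * ((N : ℝ) + 1)) ≤ D N * (((n : ℝ) + 1) * (N : ℝ)) := by
    intro N hN
    induction N, hN using Nat.le_induction with
    | base => push_cast; ring_nf; exact le_rfl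
    | succ N hN ih =>
      have htri : D (N + 1) ≥ D N - 2 * ξ (N + 1) := by
        have h1 := hclose N p
        have h2 := hclose N q
        have h4 := dist_triangle4 (f N p) (f (N+1) p) (f (N+1) q) (f N q)
        simp only [dist_eq_norm] at h4
        rw [norm_sub_rev (f N p) (f (N+1) p)] at h4
        simp only [hD]
        linarith
      have hs := hsep' N hN
      have hξp := hξpos (N + 1)
      have hstep : D N * ((N : ℝ) * ((N : ℝ) + 2)) ≤ D (N + 1) * ((N : ℝ) + 1) ^ 2 := by
        nlinarith [sq_nonneg ((N : ℝ) + 1)]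
      have hNpos : (1 : ℝ) ≤ (N : ℝ) := by exact_mod_cast by omega
      have hnpos : (1 : ℝ) ≤ (n : ℝ) := by exact_mod_cast by omega
      have hDN : 0 < D N := by nlinarith [sq_nonneg ((N : ℝ) + 1)]
      push_cast
      push_cast at ih
      nlinarith [mul_le_mul_of_nonneg_right ih (by linarith : (0:ℝ) ≤ (N:ℝ) + 2),
        mul_le_mul_of_nonneg_left hstep (by linarith : (0:ℝ) ≤ (n:ℝ) + 1)]
  -- lower bound: D N ≥ c for N ≥ n
  set c : ℝ := D n * (n : ℝ) / ((n : ℝ) + 1) with hc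
  have hnpos : (1 : ℝ) ≤ (n : ℝ) := by exact_mod_cast by omega
  have hcpos : 0 < c := by
    apply div_pos
    · nlinarith
    · linarith
  have hbound : ∀ N, n ≤ N → c ≤ D N := by
    intro N hN
    have hk := key N hN
    have hNpos : (1 : ℝ) ≤ (N : ℝ) := by exact_mod_cast by omega
    rw [hc, div_le_iff₀ (by linarith)]
    have h1 : D n * (n : ℝ) * ((N : ℝ)) ≤ D n * ((n : ℝ) * ((N : ℝ) + 1)) := by nlinarith
    have h2 : D N * (((n : ℝ) + 1) * (N : ℝ)) = (D N * ((n : ℝ) + 1)) * (N : ℝ) := by ring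
    have h3 : D n * (n : ℝ) * (N : ℝ) ≤ (D N * ((n : ℝ) + 1)) * (N : ℝ) := by
      rw [← h2]; linarith
    have := le_of_mul_le_mul_right h3 (by linarith : (0:ℝ) < (N : ℝ))
    linarith
  -- take limit
  have hFlim : Tendsto (fun N => D N) atTop (nhds ‖F p - F q‖) := by
    have hp := hlim.tendsto_at p
    have hq := hlim.tendsto_at q
    exact ((hp.sub hq).norm)
  have : c ≤ ‖F p - F q‖ :=
    ge_of_tendsto hFlim (eventually_atTop.mpr ⟨n, hbound⟩)
  rw [hFeq] at this
  simp at this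
  linarith
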